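/- arXiv:2311.18638 — 2 statements merged into one kernel-verified Lean document; each statement's English description precedes it below -/
import Mathlib

section
/- If I is a semiprime thick ideal of K (an intersection of prime thick ideals) whose support Φ_V(I) = {P ∈ Spc K : I ⊄ P} is G-invariant, then I is a G-ideal (i.e., T_g I ⊆ I for all g ∈ G). -/
open CategoryTheory Category Limits Pretriangulated MonoidalCategory ZeroObject

universe v u

variable (K : Type u) [Category.{v} K] [Preadditive K] [HasZeroObject K]
  [MonoidalCategory K] [HasShift K ℤ] [∀ n : ℤ, (shiftFunctor K n).Additive]
  [Pretriangulated K]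

/-- A (two-sided) thick ideal of a monoidal triangulated category, encoded as a set of
objects closed under isomorphism, shifts, extensions (cones), direct summands (retracts),
and tensoring on both sides by arbitrary objects. -/
structure ThickIdeal where
  carrier : Set K
  zero_mem : (0 : K) ∈ carrier
  iso_mem : ∀ {A B : K}, (A ≅ B) → A ∈ carrier → B ∈ carrier
  shift_mem : ∀ (A : K) (n : ℤ), A ∈ carrier → A⟦n⟧ ∈ carrier
  ext_mem : ∀ T ∈ (distTriang K), T.obj₁ ∈ carrier → T.obj₂ ∈ carrier → T.obj₃ ∈ carrier
  retract_mem : ∀ (A X : K), A ∈ carrier → ∀ (i : X ⟶ A) (r : A ⟶ X), i ≫ r = 𝟙 X → X ∈ carrier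
  tensor_left_mem : ∀ (A : K), A ∈ carrier → ∀ (B : K), A ⊗ B ∈ carrier
  tensor_right_mem : ∀ (A : K), A ∈ carrier → ∀ (B : K), B ⊗ A ∈ carrier

variable (G : Type*) [Group G]

/-- An action of a group `G` on a monoidal triangulated category `K`: monoidal triangulated
autoequivalences `T g` together with coherent natural isomorphisms `γ g h : T g ∘ T h ≅ T (g*h)`. -/
structure MTAction where
  T : G → K ⥤ K
  additive : ∀ g, (T g).Additive
  equivalence : ∀ g, (T g).IsEquivalence
  /-- monoidal structure isomorphisms of each `T g` -/
  μ : ∀ (g : G) (A B : K), (T g).obj A ⊗ (T g).obj B ≅ (T g).obj (A ⊗ B)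
  μ_natural : ∀ (g : G) {A A' B B' : K} (f : A ⟶ A') (f' : B ⟶ B'),
      ((T g).map f ⊗ₘ (T g).map f') ≫ (μ g A' B').hom = (μ g A B).hom ≫ (T g).map (f ⊗ₘ f')
  ε : ∀ g : G, 𝟙_ K ≅ (T g).obj (𝟙_ K)
  μ_assoc : ∀ (g : G) (A B C : K),
      ((μ g A B).hom ⊗ₘ 𝟙 ((T g).obj C)) ≫ (μ g (A ⊗ B) C).hom ≫ (T g).map (α_ A B C).hom =
        (α_ ((T g).obj A) ((T g).obj B) ((T g).obj C)).hom ≫ (𝟙 ((T g).obj A) ⊗ₘ (μ g B C).hom) ≫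
          (μ g A (B ⊗ C)).hom
  left_unitality : ∀ (g : G) (A : K),
      (λ_ ((T g).obj A)).hom =
        ((ε g).hom ⊗ₘ 𝟙 ((T g).obj A)) ≫ (μ g (𝟙_ K) A).hom ≫ (T g).map (λ_ A).hom
  right_unitality : ∀ (g : G) (A : K),
      (ρ_ ((T g).obj A)).hom =
        (𝟙 ((T g).obj A) ⊗ₘ (ε g).hom) ≫ (μ g A (𝟙_ K)).hom ≫ (T g).map (ρ_ A).hom
  /-- each `T g` commutes with the shift -/
  shiftIso : ∀ (g : G) (n : ℤ), shiftFunctor K n ⋙ T g ≅ T g ⋙ shiftFunctor K n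
  /-- each `T g` is triangulated: it sends distinguished triangles to distinguished triangles -/
  map_distinguished : ∀ (g : G), ∀ T' ∈ (distTriang K),
      Triangle.mk ((T g).map T'.mor₁) ((T g).map T'.mor₂)
        ((T g).map T'.mor₃ ≫ (shiftIso g 1).hom.app T'.obj₁) ∈ (distTriang K)
  /-- the compositor isomorphisms of the action -/
  γ : ∀ g h : G, T h ⋙ T g ≅ T (g * h)
  γ_assoc : ∀ g h k : G,
      CategoryTheory.Functor.whiskerLeft (T k) (γ g h).hom ≫ (γ (g * h) k).hom =
        CategoryTheory.Functor.whiskerRight (γ h k).hom (T g) ≫ (γ g (h * k)).hom ≫ eqToHom (by rw [mul_assoc])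

variable {K G}

/-- The image `T_g I` of a collection of objects under `T g` (closed under isomorphism). -/
def MTAction.mapSet (act : MTAction K G) (g : G) (S : Set K) : Set K :=
  {B | ∃ A ∈ S, Nonempty ((act.T g).obj A ≅ B)}

/-- A `G`-ideal: a thick ideal invariant under the action. -/
def IsGIdeal (act : MTAction K G) (I : ThickIdeal K) : Prop :=
  ∀ (g : G) (A : K), A ∈ I.carrier → (act.T g).obj A ∈ I.carrier

/-- A prime thick ideal: a proper thick ideal `P` with `A ⊗ K ⊗ B ⊆ P ⟹ A ∈ P or B ∈ P`. -/
def ThickIdeal.IsPrime (P : ThickIdeal K) : Prop :=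
  P.carrier ≠ Set.univ ∧
    ∀ A B : K, (∀ C : K, A ⊗ C ⊗ B ∈ P.carrier) → A ∈ P.carrier ∨ B ∈ P.carrier

/-- A `G`-prime: a proper `G`-ideal `Q` such that `I ⊗ J ⊆ Q` implies `I ⊆ Q` or `J ⊆ Q`
for all `G`-ideals `I`, `J`. -/
def IsGPrime (act : MTAction K G) (Q : ThickIdeal K) : Prop :=
  IsGIdeal act Q ∧ Q.carrier ≠ Set.univ ∧
    ∀ I J : ThickIdeal K, IsGIdeal act I → IsGIdeal act J →
      (∀ A ∈ I.carrier, ∀ B ∈ J.carrier, A ⊗ B ∈ Q.carrier) →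
      I.carrier ⊆ Q.carrier ∨ J.carrier ⊆ Q.carrier

/-- The smallest thick ideal containing a collection of objects. -/
def ThickIdeal.generate (S : Set K) : ThickIdeal K where
  carrier := {A | ∀ I : ThickIdeal K, S ⊆ I.carrier → A ∈ I.carrier}
  zero_mem := fun I _ => I.zero_mem
  iso_mem := fun e hA I hI => I.iso_mem e (hA I hI)
  shift_mem := fun A n hA I hI => I.shift_mem A n (hA I hI)
  ext_mem := fun T hT h1 h2 I hI => I.ext_mem T hT (h1 I hI) (h2 I hI)
  retract_mem := fun A X hA i r hir I hI => I.retract_mem A X (hA I hI) i r hir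
  tensor_left_mem := fun A hA B I hI => I.tensor_left_mem A (hA I hI) B
  tensor_right_mem := fun A hA B I hI => I.tensor_right_mem A (hA I hI) B

variable (K) in
/-- The Balmer spectrum of `K`: the set of prime thick ideals. -/
def SpcPoint := {P : ThickIdeal K // P.IsPrime}

variable (K) in
/-- The Balmer topology on `Spc K`: closed sets are generated by the sets
`V(A) = {P : A ∉ P}`. -/
def spcTopology : TopologicalSpace (SpcPoint K) :=
  TopologicalSpace.generateFrom {U | ∃ A : K, U = {P : SpcPoint K | A ∈ P.1.carrier}}

variable (K) in
/-- `K` is half-rigid if every object has a left dual or every object has a right dual. -/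
def HalfRigid : Prop :=
  (∀ A : K, ∃ B : K, Nonempty (ExactPairing A B)) ∨
    (∀ A : K, ∃ B : K, Nonempty (ExactPairing B A))

/-!
For each prime `P` among those cutting out `I`, the preimage `T_g⁻¹ P` is again prime and
`T_g (T_g⁻¹ P) = P`. If `I ⊄ T_g⁻¹ P`, invariance of the support would give `I ⊄ P`; hence
`I ⊆ T_g⁻¹ P`, i.e. `T_g I ⊆ P`, and intersecting over all such `P` gives `T_g I ⊆ I`.
-/

namespace MTAction

variable (act : MTAction K G) (g : G)

def comap (P : ThickIdeal K) : ThickIdeal K where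
  carrier := {A | (act.T g).obj A ∈ P.carrier}
  zero_mem := by
    have := act.additive g
    exact P.iso_mem (act.T g).mapZeroObject.symm P.zero_mem
  iso_mem e hA := P.iso_mem ((act.T g).mapIso e) hA
  shift_mem A n hA := P.iso_mem ((act.shiftIso g n).app A).symm (P.shift_mem _ n hA)
  ext_mem T' hT' h₁ h₂ := P.ext_mem _ (act.map_distinguished g T' hT') h₁ h₂
  retract_mem A X hA i r hir :=
    P.retract_mem _ _ hA ((act.T g).map i) ((act.T g).map r)
      (by rw [← (act.T g).map_comp, hir, (act.T g).map_id])
  tensor_left_mem A hA B := P.iso_mem (act.μ g A B) (P.tensor_left_mem _ hA _)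
  tensor_right_mem A hA B := P.iso_mem (act.μ g B A) (P.tensor_right_mem _ hA _)

theorem mapSet_comap (P : ThickIdeal K) :
    act.mapSet g (act.comap g P).carrier = P.carrier := by
  have := act.equivalence g
  ext B
  constructor
  · rintro ⟨A, hA, ⟨e⟩⟩
    exact P.iso_mem e hA
  · intro hB
    exact ⟨(act.T g).objPreimage B, P.iso_mem ((act.T g).objObjPreimageIso B).symm hB,
      ⟨(act.T g).objObjPreimageIso B⟩⟩

theorem mapSet_univ : act.mapSet g Set.univ = Set.univ := by
  have := act.equivalence g
  exact Set.eq_univ_of_forall fun B =>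
    ⟨(act.T g).objPreimage B, trivial, ⟨(act.T g).objObjPreimageIso B⟩⟩

theorem comap_isPrime {P : ThickIdeal K} (hP : P.IsPrime) : (act.comap g P).IsPrime := by
  have := act.equivalence g
  refine ⟨fun htop => hP.1 ?_, fun A B hAB => ?_⟩
  · rw [← act.mapSet_comap g P, htop, act.mapSet_univ]
  · refine hP.2 ((act.T g).obj A) ((act.T g).obj B) fun C' => ?_
    let C := (act.T g).objPreimage C'
    have e : (act.T g).obj (A ⊗ C ⊗ B) ≅ (act.T g).obj A ⊗ C' ⊗ (act.T g).obj B :=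
      (act.μ g A (C ⊗ B)).symm ≪≫ whiskerLeftIso _ ((act.μ g C B).symm ≪≫
        whiskerRightIso ((act.T g).objObjPreimageIso C') _)
    exact P.iso_mem e (hAB C)

end MTAction

/-- If `I` is a semiprime thick ideal of `K` (an intersection of prime thick
ideals) whose support `Φ_V(I) = {P ∈ Spc K : I ⊄ P}` is `G`-invariant, then `I` is a
`G`-ideal. -/
theorem semiprime_gInvariant_support_isGIdeal (act : MTAction K G) (I : ThickIdeal K)
    (hsemi : ∃ SP : Set (ThickIdeal K), (∀ P ∈ SP, P.IsPrime) ∧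
      I.carrier = ⋂ P ∈ SP, P.carrier)
    (hsupp : ∀ (g : G) (P Q : ThickIdeal K), P.IsPrime →
      Q.carrier = act.mapSet g P.carrier →
      (¬ I.carrier ⊆ P.carrier → ¬ I.carrier ⊆ Q.carrier)) :
    IsGIdeal act I := by
  obtain ⟨SP, hSP, hI⟩ := hsemi
  intro g A hA
  rw [hI, Set.mem_iInter₂]
  intro P hP
  have hIP : I.carrier ⊆ P.carrier := hI ▸ Set.biInter_subset_of_mem hP
  have hIcomap : I.carrier ⊆ (act.comap g P).carrier := by
    by_contra hnot
    exact hsupp g _ P (act.comap_isPrime g (hSP P hP)) (act.mapSet_comap g P).symm hnot hIP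
  exact hIcomap hA
end

section
/- Let K be a half-rigid monoidal triangulated category with Noetherian Balmer spectrum, and let G act on K. If a prime thick ideal P satisfies T_g P ⊆ P for some g ∈ G, then T_g P = P. -/
open CategoryTheory Category Limits Pretriangulated MonoidalCategory ZeroObject

universe v u

variable (K : Type u) [Category.{v} K] [Preadditive K] [HasZeroObject K]
  [MonoidalCategory K] [HasShift K ℤ] [∀ n : ℤ, (shiftFunctor K n).Additive]
  [Pretriangulated K]

variable (G : Type*) [Group G]

variable {K G}

/-! `T_g` induces an order embedding of the poset of primes into itself (it is fully faithful
and preserves prime thick ideals). The primes below a fixed prime form a closed subset of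
`Spc K`, so Noetherianity makes the inclusion order on primes well founded. An order embedding
`f` with `f P < P` would produce the infinite strictly descending chain `P > f P > f² P > ⋯`. -/

theorem StrictMono.map_eq_of_map_le {α : Type*} [PartialOrder α] [WellFoundedLT α]
    {f : α → α} (hf : StrictMono f) {x : α} (hx : f x ≤ x) : f x = x := by
  by_contra hne
  exact not_strictAnti_of_wellFoundedLT _ (hf.strictAnti_iterate_of_map_lt (hx.lt_of_ne hne))

theorem ThickIdeal.carrier_injective : Function.Injective (ThickIdeal.carrier (K := K)) := by
  rintro ⟨⟩ ⟨⟩ rfl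
  rfl

namespace SpcPoint

instance : PartialOrder (SpcPoint K) :=
  PartialOrder.lift (fun P => P.1.carrier)
    (ThickIdeal.carrier_injective.comp Subtype.val_injective)

theorem le_iff_carrier_subset {P Q : SpcPoint K} : P ≤ Q ↔ P.1.carrier ⊆ Q.1.carrier :=
  Iff.rfl

theorem isOpen_setOf_mem (A : K) :
    @IsOpen (SpcPoint K) (spcTopology K) {P | A ∈ P.1.carrier} :=
  TopologicalSpace.isOpen_generateFrom_of_mem ⟨A, rfl⟩

theorem isClosed_Iic (P : SpcPoint K) : @IsClosed (SpcPoint K) (spcTopology K) (Set.Iic P) := by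
  let := spcTopology K
  have hIic : Set.Iic P = ⋂ A ∈ P.1.carrierᶜ, {Q : SpcPoint K | A ∈ Q.1.carrier}ᶜ := by
    ext Q
    simp only [Set.mem_Iic, le_iff_carrier_subset, Set.mem_iInter, Set.mem_compl_iff,
      Set.mem_ofPred_eq]
    exact ⟨fun h A hA hQ => hA (h hQ), fun h A hQ => by_contra fun hA => h A hA hQ⟩
  rw [hIic]
  exact isClosed_biInter fun A _ => (isOpen_setOf_mem A).isClosed_compl

theorem wellFoundedLT_of_noetherianSpace
    (hN : @TopologicalSpace.NoetherianSpace (SpcPoint K) (spcTopology K)) :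
    WellFoundedLT (SpcPoint K) := by
  let := spcTopology K
  let Z : SpcPoint K → TopologicalSpace.Closeds (SpcPoint K) :=
    fun P => ⟨Set.Iic P, isClosed_Iic P⟩
  exact StrictMono.wellFoundedLT (f := Z) fun _ _ h => Set.Iic_ssubset_Iic.mpr h

end SpcPoint

namespace MTAction

variable (act : MTAction K G) (g : G)

theorem mem_mapSet_of_iso {S : Set K} {A B : K} (e : A ≅ B) (hA : A ∈ act.mapSet g S) :
    B ∈ act.mapSet g S := by
  obtain ⟨A', hA', ⟨e'⟩⟩ := hA
  exact ⟨A', hA', ⟨e' ≪≫ e⟩⟩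

theorem obj_mem_mapSet {S : Set K} {A : K} (hA : A ∈ S) : (act.T g).obj A ∈ act.mapSet g S :=
  ⟨A, hA, ⟨Iso.refl _⟩⟩

theorem mem_of_obj_mem_mapSet (I : ThickIdeal K) {A : K}
    (h : (act.T g).obj A ∈ act.mapSet g I.carrier) : A ∈ I.carrier := by
  have := act.equivalence g
  obtain ⟨A', hA', ⟨e⟩⟩ := h
  exact I.iso_mem ((act.T g).preimageIso e) hA'

theorem mapSet_subset_mapSet_iff {S : Set K} (I : ThickIdeal K) :
    act.mapSet g S ⊆ act.mapSet g I.carrier ↔ S ⊆ I.carrier := by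
  refine ⟨fun h A hA => act.mem_of_obj_mem_mapSet g I (h (act.obj_mem_mapSet g hA)), ?_⟩
  rintro h B ⟨A, hA, e⟩
  exact ⟨A, h hA, e⟩

theorem mapSet_ext_mem (I : ThickIdeal K) (T' : Triangle K) (hT' : T' ∈ distTriang K)
    (h₁ : T'.obj₁ ∈ act.mapSet g I.carrier) (h₂ : T'.obj₂ ∈ act.mapSet g I.carrier) :
    T'.obj₃ ∈ act.mapSet g I.carrier := by
  have := act.equivalence g
  obtain ⟨A₁, hA₁, ⟨e₁⟩⟩ := h₁
  obtain ⟨A₂, hA₂, ⟨e₂⟩⟩ := h₂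
  obtain ⟨f, hf⟩ := (act.T g).map_surjective (e₁.hom ≫ T'.mor₁ ≫ e₂.inv)
  obtain ⟨Z, u, v, hZ⟩ := distinguished_cocone_triangle f
  have hcomm : (act.T g).map f ≫ e₂.hom = e₁.hom ≫ T'.mor₁ := by simp [hf]
  exact ⟨Z, I.ext_mem _ hZ hA₁ hA₂,
    ⟨Triangle.π₃.mapIso (isoTriangleOfIso₁₂ _ T' (act.map_distinguished g _ hZ) hT' e₁ e₂ hcomm)⟩⟩

noncomputable def mapIdeal (I : ThickIdeal K) : ThickIdeal K where
  carrier := act.mapSet g I.carrier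
  zero_mem := by
    have := act.additive g
    exact ⟨0, I.zero_mem, ⟨((act.T g).map_isZero (isZero_zero K)).isoZero⟩⟩
  iso_mem := act.mem_mapSet_of_iso g
  shift_mem := by
    rintro B n ⟨A, hA, ⟨e⟩⟩
    exact ⟨A⟦n⟧, I.shift_mem A n hA, ⟨(act.shiftIso g n).app A ≪≫ (shiftFunctor K n).mapIso e⟩⟩
  ext_mem := act.mapSet_ext_mem g I
  retract_mem := by
    have := act.equivalence g
    rintro B X ⟨A, hA, ⟨e⟩⟩ i r hir
    let E := (act.T g).asEquivalence
    have hB : E.inverse.obj B ∈ I.carrier :=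
      I.iso_mem (E.unitIso.app A ≪≫ E.inverse.mapIso e) hA
    refine ⟨E.inverse.obj X, ?_, ⟨E.counitIso.app X⟩⟩
    refine I.retract_mem _ _ hB (E.inverse.map i) (E.inverse.map r) ?_
    rw [← E.inverse.map_comp, hir, E.inverse.map_id]
  tensor_left_mem := by
    have := act.equivalence g
    rintro B ⟨A, hA, ⟨e⟩⟩ C
    exact ⟨A ⊗ (act.T g).objPreimage C, I.tensor_left_mem A hA _,
      ⟨(act.μ g A _).symm ≪≫ tensorIso e ((act.T g).objObjPreimageIso C)⟩⟩
  tensor_right_mem := by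
    have := act.equivalence g
    rintro B ⟨A, hA, ⟨e⟩⟩ C
    exact ⟨(act.T g).objPreimage C ⊗ A, I.tensor_right_mem A hA _,
      ⟨(act.μ g _ A).symm ≪≫ tensorIso ((act.T g).objObjPreimageIso C) e⟩⟩

theorem mapIdeal_isPrime {P : ThickIdeal K} (hP : P.IsPrime) : (act.mapIdeal g P).IsPrime := by
  have := act.equivalence g
  refine ⟨fun htop => ?_, fun A B hAB => ?_⟩
  · obtain ⟨A, hA⟩ := (Set.ne_univ_iff_exists_notMem _).mp hP.1
    exact hA (act.mem_of_obj_mem_mapSet g P (Set.eq_univ_iff_forall.mp htop _))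
  · let A₀ := (act.T g).objPreimage A
    let B₀ := (act.T g).objPreimage B
    have hA₀ : (act.T g).obj A₀ ≅ A := (act.T g).objObjPreimageIso A
    have hB₀ : (act.T g).obj B₀ ≅ B := (act.T g).objObjPreimageIso B
    have hmem : ∀ C : K, A₀ ⊗ C ⊗ B₀ ∈ P.carrier := fun C =>
      act.mem_of_obj_mem_mapSet g P <| act.mem_mapSet_of_iso g
        ((act.μ g A₀ (C ⊗ B₀)).symm ≪≫
          tensorIso hA₀ ((act.μ g C B₀).symm ≪≫ tensorIso (Iso.refl _) hB₀)).symm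
        (hAB ((act.T g).obj C))
    exact (hP.2 A₀ B₀ hmem).imp (fun h => ⟨A₀, h, ⟨hA₀⟩⟩) (fun h => ⟨B₀, h, ⟨hB₀⟩⟩)

noncomputable def mapSpc (P : SpcPoint K) : SpcPoint K :=
  ⟨act.mapIdeal g P.1, act.mapIdeal_isPrime g P.2⟩

theorem mapSpc_strictMono : StrictMono (act.mapSpc g) :=
  strictMono_of_le_iff_le fun _ Q => (act.mapSet_subset_mapSet_iff g Q.1).symm

end MTAction

theorem prime_mapSet_subset_eq_general (act : MTAction K G)
    (hN : @TopologicalSpace.NoetherianSpace (SpcPoint K) (spcTopology K))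
    (P : ThickIdeal K) (hP : P.IsPrime)
    (g : G) (hsub : act.mapSet g P.carrier ⊆ P.carrier) :
    act.mapSet g P.carrier = P.carrier := by
  have := SpcPoint.wellFoundedLT_of_noetherianSpace hN
  have hfix := (act.mapSpc_strictMono g).map_eq_of_map_le (x := ⟨P, hP⟩) hsub
  exact congrArg (fun Q : SpcPoint K => Q.1.carrier) hfix

/-- Let `K` be a half-rigid monoidal triangulated category with Noetherian
Balmer spectrum. If a prime thick ideal `P` satisfies `T_g P ⊆ P` for some `g ∈ G`, then
`T_g P = P`. -/
theorem prime_mapSet_subset_eq (act : MTAction K G) (hR : HalfRigid K)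
    (hN : @TopologicalSpace.NoetherianSpace (SpcPoint K) (spcTopology K))
    (P : ThickIdeal K) (hP : P.IsPrime)
    (g : G) (hsub : act.mapSet g P.carrier ⊆ P.carrier) :
    act.mapSet g P.carrier = P.carrier :=
  prime_mapSet_subset_eq_general act hN P hP g hsub
end
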